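/- The vectorized form of a POVM measurement channel is a positive contraction: Let {E_a}_{a ∈ O} be a finite family of n×n positive semidefinite complex matrices with ∑_a E_a = 1. Then the (n·n)×(n·n) matrix T := ∑_a √(E_a) ⊗ₖ (√(E_a))ᵀ is Hermitian, positive semidefinite, and satisfies 0 ≤ T ≤ 1 (that is, both T and 1 − T are positive semidefinite); equivalently, all eigenvalues of T lie in the interval [0,1]. -/

import Mathlib

/-!
For Hermitian `S`, the Hermitian matrix `D = S ⊗ₖ 1 - 1 ⊗ₖ Sᵀ` satisfies
`D * D = S² ⊗ₖ 1 + 1 ⊗ₖ (S²)ᵀ - 2 (S ⊗ₖ Sᵀ)`,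
so `2 (S ⊗ₖ Sᵀ) ≤ S² ⊗ₖ 1 + 1 ⊗ₖ (S²)ᵀ` (an operator AM-GM inequality).
Taking `S = √E_a` and summing, `∑ E_a = 1` gives `2 T ≤ 2`.
Positivity of `T` is positivity of Kronecker products of positive matrices.
-/

open Matrix
open scoped Kronecker ComplexOrder

noncomputable def Matrix.PosSemidef.sqrt {n : Type*} {𝕜 : Type*} [Fintype n] [DecidableEq n]
    [RCLike 𝕜] {A : Matrix n n 𝕜} (hA : A.PosSemidef) : Matrix n n 𝕜 :=
  hA.1.eigenvectorUnitary.1 * diagonal ((↑) ∘ (√·) ∘ hA.1.eigenvalues) *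
    (star hA.1.eigenvectorUnitary : Matrix n n 𝕜)

open scoped MatrixOrder

namespace Matrix

variable {n 𝕜 : Type*} [RCLike 𝕜]

theorem PosSemidef.sqrt_eq_cfcSqrt [Fintype n] [DecidableEq n] {A : Matrix n n 𝕜}
    (hA : A.PosSemidef) : hA.sqrt = CFC.sqrt A := by
  rw [CFC.sqrt_eq_real_sqrt A hA.nonneg, cfcₙ_eq_cfc, hA.1.cfc_eq, IsHermitian.cfc,
    Unitary.conjStarAlgAut_apply]
  rfl

theorem sum_kronecker {ι l m p q : Type*} [Fintype ι] (A : ι → Matrix l m 𝕜)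
    (B : Matrix p q 𝕜) :
    ∑ i, A i ⊗ₖ B = (∑ i, A i) ⊗ₖ B :=
  (map_sum ((kroneckerBilinear (R := 𝕜)).flip B) A Finset.univ).symm

theorem kronecker_sum {ι l m p q : Type*} [Fintype ι] (A : Matrix l m 𝕜)
    (B : ι → Matrix p q 𝕜) :
    ∑ i, A ⊗ₖ B i = A ⊗ₖ ∑ i, B i :=
  (map_sum (kroneckerBilinear (R := 𝕜) A) B Finset.univ).symm

theorem le_of_two_nsmul_le {A B : Matrix n n 𝕜} (h : 2 • A ≤ 2 • B) : A ≤ B := by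
  rw [le_iff, ← nsmul_sub, two_nsmul, ← two_smul ℝ] at h
  rw [le_iff]
  simpa [smul_smul] using h.smul (a := (2⁻¹ : ℝ)) (by norm_num)

section

variable [Fintype n] [DecidableEq n]

theorem IsHermitian.two_nsmul_kronecker_transpose_le {S : Matrix n n 𝕜} (hS : S.IsHermitian) :
    2 • (S ⊗ₖ Sᵀ) ≤ (S * S) ⊗ₖ 1 + 1 ⊗ₖ (S * S)ᵀ := by
  set D := S ⊗ₖ 1 - 1 ⊗ₖ Sᵀ
  have hD : Dᴴ = D := by
    simp only [D, conjTranspose_sub, conjTranspose_kronecker, conjTranspose_one,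
      conjTranspose_transpose_eq_transpose_conjTranspose, hS.eq]
  have key : (S * S) ⊗ₖ 1 + 1 ⊗ₖ (S * S)ᵀ - 2 • (S ⊗ₖ Sᵀ) = Dᴴ * D := by
    rw [hD]
    simp only [D, sub_mul, mul_sub, ← mul_kronecker_mul, Matrix.one_mul, Matrix.mul_one,
      transpose_mul]
    abel
  rw [le_iff, key]
  exact posSemidef_conjTranspose_mul_self D

theorem sum_kronecker_transpose_le_one {ι : Type*} [Fintype ι] {S : ι → Matrix n n 𝕜}
    (hS : ∀ i, (S i).IsHermitian) (h : ∑ i, S i * S i = 1) :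
    ∑ i, S i ⊗ₖ (S i)ᵀ ≤ 1 := by
  apply le_of_two_nsmul_le
  calc 2 • ∑ i, S i ⊗ₖ (S i)ᵀ = ∑ i, 2 • (S i ⊗ₖ (S i)ᵀ) := Finset.smul_sum ..
    _ ≤ ∑ i, ((S i * S i) ⊗ₖ 1 + 1 ⊗ₖ (S i * S i)ᵀ) :=
      Finset.sum_le_sum fun i _ => (hS i).two_nsmul_kronecker_transpose_le
    _ = 2 • 1 := by
      rw [Finset.sum_add_distrib, sum_kronecker, kronecker_sum, ← transpose_sum, h,
        transpose_one, one_kronecker_one, two_nsmul]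

end

end Matrix

/-- The vectorized form of a POVM measurement channel,
`T = ∑ a, √(E_a) ⊗ₖ (√(E_a))ᵀ`, is a positive contraction: `0 ≤ T ≤ 1`. -/
theorem vectorized_povm_channel_is_positive_contraction
    (n : ℕ) (O : Type) [Fintype O]
    (E : O → Matrix (Fin n) (Fin n) ℂ)
    (hE : ∀ a, (E a).PosSemidef)
    (hsum : ∑ a, E a = 1) :
    (∑ a, (hE a).sqrt ⊗ₖ ((hE a).sqrt)ᵀ).IsHermitian ∧
    (∑ a, (hE a).sqrt ⊗ₖ ((hE a).sqrt)ᵀ).PosSemidef ∧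
    (1 - ∑ a, (hE a).sqrt ⊗ₖ ((hE a).sqrt)ᵀ).PosSemidef := by
  simp only [PosSemidef.sqrt_eq_cfcSqrt]
  have hsqrt a : (CFC.sqrt (E a)).PosSemidef := (CFC.sqrt_nonneg (E a)).posSemidef
  have hT : (∑ a, CFC.sqrt (E a) ⊗ₖ (CFC.sqrt (E a))ᵀ).PosSemidef :=
    posSemidef_sum _ fun a _ => (hsqrt a).kronecker (hsqrt a).transpose
  refine ⟨hT.1, hT, sum_kronecker_transpose_le_one (fun a => (hsqrt a).1) ?_⟩
  simpa only [fun a => CFC.sqrt_mul_sqrt_self (E a) (hE a).nonneg] using hsum
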